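/- arXiv:0902.1364 — 2 statements merged into one kernel-verified Lean document; each statement's English description precedes it below -/
import Mathlib

section
/- Let G be a k-connected chordal graph with at least k+2 vertices and clique tree T. An edge e = {u,v} ∈ E(G) is contractible if and only if either (i) e lies in a unique maximal clique of G, or (ii) for every edge {x,y} of T with {u,v} ⊆ l(x) ∩ l(y), one has |l(x) ∩ l(y)| > k. -/
open SimpleGraph

/-- `S` is a vertex separator of `G`: deleting `S` leaves a disconnected graph
(two vertices with no path between them). -/
def IsSeparator {V : Type*} (G : SimpleGraph V) (S : Set V) : Prop :=
  ¬ (G.induce (Sᶜ : Set V)).Preconnected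

/-- `S` is a minimal vertex separator of `G`. -/
def MinimalSeparator {V : Type*} (G : SimpleGraph V) (S : Set V) : Prop :=
  IsSeparator G S ∧ ∀ S' ⊂ S, ¬ IsSeparator G S'

/-- `G` is `k`-connected: more than `k` vertices and every separator has size at least `k`. -/
def KConnected {V : Type*} [Fintype V] (k : ℕ) (G : SimpleGraph V) : Prop :=
  k < Fintype.card V ∧ ∀ S : Set V, IsSeparator G S → k ≤ S.ncard

/-- Vertex connectivity: least size of a set whose removal disconnects the graph
or leaves at most one vertex. -/
noncomputable def vConn {V : Type*} [Fintype V] (G : SimpleGraph V) : ℕ :=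
  sInf {n | ∃ S : Set V, S.ncard = n ∧ (IsSeparator G S ∨ (Sᶜ : Set V).ncard ≤ 1)}

/-- Contraction of the edge `{u,v}`: the vertex `v` is deleted and `u` plays the
role of the merged vertex `z`, adjacent to all former neighbors of `u` or `v`. -/
def contract {V : Type*} (G : SimpleGraph V) (u v : V) :
    SimpleGraph {x : V // x ≠ v} where
  Adj a b := a ≠ b ∧ (G.Adj a b ∨ (a.1 = u ∧ G.Adj v b) ∨ (b.1 = u ∧ G.Adj v a))
  symm := ⟨by
    rintro a b ⟨h1, h2 | ⟨h3, h4⟩ | ⟨h3, h4⟩⟩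
    · exact ⟨h1.symm, Or.inl h2.symm⟩
    · exact ⟨h1.symm, Or.inr (Or.inr ⟨h3, h4⟩)⟩
    · exact ⟨h1.symm, Or.inr (Or.inl ⟨h3, h4⟩)⟩⟩
  loopless := ⟨by rintro a ⟨h, -⟩; exact h rfl⟩

/-- A tree decomposition of `G` with tree `T` and bags `l`. -/
structure TreeDecomp {V ι : Type*} (G : SimpleGraph V) (T : SimpleGraph ι)
    (l : ι → Set V) : Prop where
  conn : T.Connected
  acyclic : T.IsAcyclic
  coversV : ∀ v : V, ∃ x : ι, v ∈ l x
  coversE : ∀ ⦃u v : V⦄, G.Adj u v → ∃ x : ι, u ∈ l x ∧ v ∈ l x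
  subtree : ∀ v : V, (T.induce {x : ι | v ∈ l x}).Connected

/-- A clique tree of `G`: a tree decomposition whose bags are exactly the
maximal cliques of `G`. -/
def IsCliqueTree {V ι : Type*} (G : SimpleGraph V) (T : SimpleGraph ι)
    (l : ι → Set V) : Prop :=
  TreeDecomp G T l ∧ (∀ x : ι, Maximal G.IsClique (l x)) ∧
    ∀ C : Set V, Maximal G.IsClique C → ∃ x : ι, l x = C

/-- `G` is chordal: every cycle of length at least 4 has a chord. -/
def IsChordal {V : Type*} (G : SimpleGraph V) : Prop :=
  ∀ (v : V) (w : G.Walk v v), w.IsCycle → 4 ≤ w.length →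
    ∃ a b : V, G.Adj a b ∧ a ∈ w.support ∧ b ∈ w.support ∧ s(a, b) ∉ w.edges

/-- A split partition of `G`: `I` is a stable set, `K` a clique, partitioning the vertices. -/
def IsSplitPartition {V : Type*} (G : SimpleGraph V) (I K : Set V) : Prop :=
  I ∪ K = Set.univ ∧ Disjoint I K ∧ (∀ a ∈ I, ∀ b ∈ I, ¬ G.Adj a b) ∧ G.IsClique K

/-!
Separators of `G / uv` correspond to separators of `G`, the merged vertex being counted once
for both `u` and `v`; hence `G / uv` stays `k`-connected iff no separator of size `k` contains
both `u` and `v`. In a clique tree the intersection of two adjacent distinct bags is a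
separator, every separator contains such an intersection, and every bag has more than `k`
vertices. So the `k`-separators through `u, v` are exactly the intersections `l x ∩ l y` of
size `k` over tree edges with `l x ≠ l y` containing `u, v`; a unique maximal clique through
`uv` rules out such an edge.
-/

section Separators

variable {V W : Type*} {G : SimpleGraph V} {H : SimpleGraph W}

theorem SimpleGraph.Preconnected.of_surjective {f : V → W} (hf : Function.Surjective f)
    (hadj : ∀ a b, G.Adj a b → f a = f b ∨ H.Adj (f a) (f b)) (hG : G.Preconnected) :
    H.Preconnected := by
  intro c d
  obtain ⟨a, rfl⟩ := hf c
  obtain ⟨b, rfl⟩ := hf d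
  refine (reachable_iff_reflTransGen _ _).2 <| Relation.ReflTransGen.lift' f (fun a b h => ?_) _ _
    ((reachable_iff_reflTransGen _ _).1 (hG a b))
  show Relation.ReflTransGen H.Adj (f a) (f b)
  rcases hadj a b h with e | h'
  · exact e ▸ .refl
  · exact .single h'

theorem IsSeparator.of_map {s : Set V} {t : Set W} (f : V → W) (hmaps : ∀ a ∉ s, f a ∉ t)
    (hsurj : ∀ b ∉ t, ∃ a ∉ s, f a = b)
    (hadj : ∀ a b, a ∉ s → b ∉ s → G.Adj a b → f a = f b ∨ H.Adj (f a) (f b))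
    (ht : IsSeparator H t) : IsSeparator G s := by
  refine fun hG => ht (hG.of_surjective (f := fun a : ↥sᶜ => ⟨f a, hmaps a a.2⟩) ?_ ?_)
  · rintro ⟨b, hb⟩
    obtain ⟨a, ha, rfl⟩ := hsurj b hb
    exact ⟨⟨a, ha⟩, rfl⟩
  · rintro ⟨a, ha⟩ ⟨b, hb⟩ h
    simpa [Subtype.ext_iff] using hadj a b ha hb h

end Separators

section Contraction

variable {V : Type*} {G : SimpleGraph V} {u v : V}

theorem IsSeparator.contract_preimage {S : Set V} (hS : IsSeparator G S) (hu : u ∈ S)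
    (hv : v ∈ S) :
    IsSeparator (contract G u v) (Subtype.val ⁻¹' S) := by
  refine IsSeparator.of_map Subtype.val (fun _ h => h)
    (fun b hb => ⟨⟨b, fun h => hb (h ▸ hv)⟩, hb, rfl⟩) ?_ hS
  rintro a b ha hb ⟨-, h | ⟨hau, -⟩ | ⟨hbu, -⟩⟩
  · exact .inr h
  · exact absurd (show a.1 ∈ S from hau ▸ hu) ha
  · exact absurd (show b.1 ∈ S from hbu ▸ hu) hb

variable [DecidableEq V]

def contractProj (huv : u ≠ v) (a : V) : {x : V // x ≠ v} :=
  if h : a = v then ⟨u, huv⟩ else ⟨a, h⟩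

theorem contractProj_self (huv : u ≠ v) : contractProj huv v = ⟨u, huv⟩ := dif_pos rfl

theorem contractProj_of_ne (huv : u ≠ v) {a : V} (h : a ≠ v) :
    contractProj huv a = ⟨a, h⟩ :=
  dif_neg h

theorem contract_adj_contractProj (huv : u ≠ v) {a b : V} (h : G.Adj a b) :
    contractProj huv a = contractProj huv b ∨
      (contract G u v).Adj (contractProj huv a) (contractProj huv b) := by
  have merged : ∀ {b}, b ≠ v → G.Adj v b → contractProj huv v = contractProj huv b ∨
      (contract G u v).Adj (contractProj huv v) (contractProj huv b) := by
    intro b hb h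
    rw [contractProj_self, contractProj_of_ne huv hb]
    by_cases hbu : b = u
    · subst hbu
      exact .inl rfl
    · exact .inr ⟨fun e => hbu (congrArg Subtype.val e).symm, .inr (.inl ⟨rfl, h⟩)⟩
  by_cases ha : a = v <;> by_cases hb : b = v
  · exact absurd (ha.trans hb.symm) h.ne
  · subst ha
    exact merged hb h
  · subst hb
    exact (merged ha h.symm).imp Eq.symm Adj.symm
  · rw [contractProj_of_ne huv ha, contractProj_of_ne huv hb]
    exact .inr ⟨fun e => h.ne (congrArg Subtype.val e), .inl h⟩

theorem IsSeparator.of_contract (huv : u ≠ v) {S' : Set {x : V // x ≠ v}}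
    (hS' : IsSeparator (contract G u v) S') {s : Set V} (hs₁ : Subtype.val '' S' ⊆ s)
    (hs₂ : s ⊆ insert v (Subtype.val '' S')) (hv : ⟨u, huv⟩ ∈ S' → v ∈ s) :
    IsSeparator G s := by
  refine IsSeparator.of_map (contractProj huv) (fun a ha hmem => ?_) (fun b hb => ?_)
    (fun _ _ _ _ h => contract_adj_contractProj huv h) hS'
  · by_cases hav : a = v
    · subst hav
      rw [contractProj_self] at hmem
      exact ha (hv hmem)
    · rw [contractProj_of_ne huv hav] at hmem
      exact ha (hs₁ ⟨_, hmem, rfl⟩)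
  · refine ⟨b.1, fun hbs => ?_, contractProj_of_ne huv b.2⟩
    rcases hs₂ hbs with h | ⟨c, hc, hcb⟩
    · exact b.2 h
    · exact hb (Subtype.ext hcb ▸ hc)

theorem kConnected_contract_iff [Fintype V] {k : ℕ} (hcard : k + 2 ≤ Fintype.card V)
    (hconn : KConnected k G) (huv : u ≠ v) :
    KConnected k (contract G u v) ↔
      ∀ S : Set V, IsSeparator G S → u ∈ S → v ∈ S → k < S.ncard := by
  constructor
  · intro hK S hS hu hv
    have hpreimage : (Subtype.val ⁻¹' S : Set {x : V // x ≠ v}).ncard + 1 = S.ncard := by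
      have hrange : S \ {v} ⊆ Set.range (Subtype.val : {x : V // x ≠ v} → V) :=
        fun x hx => ⟨⟨x, hx.2⟩, rfl⟩
      have hdiff :
          (Subtype.val ⁻¹' S : Set {x : V // x ≠ v}) = Subtype.val ⁻¹' (S \ {v}) := by
        ext x
        simpa using fun _ => x.2
      rw [hdiff, Set.ncard_preimage_of_injective_subset_range Subtype.val_injective hrange,
        Set.ncard_sdiff_singleton_add_one hv]
    have := hK.2 _ (hS.contract_preimage hu hv)
    omega
  · intro h
    have hcardC : Fintype.card {x : V // x ≠ v} = Fintype.card V - 1 := by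
      rw [Fintype.card_subtype_compl, Fintype.card_subtype_eq]
    refine ⟨by omega, fun S' hS' => ?_⟩
    by_contra! hlt
    have himage : (Subtype.val '' S').ncard = S'.ncard :=
      Set.ncard_image_of_injective _ Subtype.val_injective
    by_cases hz : ⟨u, huv⟩ ∈ S'
    · have hsep := hS'.of_contract huv (Set.subset_insert _ _) subset_rfl
        fun _ => Set.mem_insert _ _
      have := h _ hsep (Set.mem_insert_of_mem _ ⟨_, hz, rfl⟩) (Set.mem_insert _ _)
      have hvS : v ∉ Subtype.val '' S' := fun ⟨c, _, hc⟩ => c.2 hc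
      rw [Set.ncard_insert_of_notMem hvS, himage] at this
      omega
    · have := hconn.2 _ (hS'.of_contract huv subset_rfl (Set.subset_insert _ _) (absurd · hz))
      omega

end Contraction

section TreeEdge

variable {ι : Type*} {T : SimpleGraph ι} {x y : ι}

theorem SimpleGraph.Connected.reachable_deleteEdges_or (hT : T.Connected) (x y n : ι) :
    (T.deleteEdges {s(x, y)}).Reachable n x ∨ (T.deleteEdges {s(x, y)}).Reachable n y := by
  have step : ∀ {a b : ι}, T.Walk a b →
      (T.deleteEdges {s(x, y)}).Reachable b x ∨ (T.deleteEdges {s(x, y)}).Reachable b y →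
      (T.deleteEdges {s(x, y)}).Reachable a x ∨ (T.deleteEdges {s(x, y)}).Reachable a y := by
    intro a b p
    induction p with
    | nil => exact id
    | @cons a c _ h _ ih =>
      intro hb
      by_cases hac : s(a, c) = s(x, y)
      · rcases Sym2.eq_iff.mp hac with ⟨rfl, -⟩ | ⟨rfl, -⟩
        exacts [.inl .rfl, .inr .rfl]
      · have had : (T.deleteEdges {s(x, y)}).Adj a c := by simp [h, hac]
        exact (ih hb).imp had.reachable.trans had.reachable.trans
  obtain ⟨p⟩ := hT.preconnected n x
  exact step p (.inl .rfl)

theorem SimpleGraph.IsAcyclic.mem_edges_of_reachable_deleteEdges (hT : T.IsAcyclic)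
    (hxy : T.Adj x y) {n m : ι} (hn : (T.deleteEdges {s(x, y)}).Reachable n x)
    (hm : (T.deleteEdges {s(x, y)}).Reachable m y) (p : T.Walk n m) : s(x, y) ∈ p.edges := by
  by_contra hp
  have hnm : (T.deleteEdges {s(x, y)}).Reachable n m :=
    ⟨p.toDeleteEdges _ fun e he h => hp (Set.mem_singleton_iff.1 h ▸ he)⟩
  exact isBridge_iff.mp (isAcyclic_iff_forall_adj_isBridge.mp hT hxy) (hn.symm.trans (hnm.trans hm))

end TreeEdge

namespace TreeDecomp

variable {V ι : Type*} {G : SimpleGraph V} {T : SimpleGraph ι} {l : ι → Set V} {x y : ι}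

theorem mem_inter_of_reachable_deleteEdges (hTD : TreeDecomp G T l) (hxy : T.Adj x y)
    {n m : ι} {w : V} (hn : (T.deleteEdges {s(x, y)}).Reachable n x)
    (hm : (T.deleteEdges {s(x, y)}).Reachable m y)
    (hwn : w ∈ l n) (hwm : w ∈ l m) : w ∈ l x ∩ l y := by
  obtain ⟨p⟩ := (hTD.subtree w).preconnected ⟨n, hwn⟩ ⟨m, hwm⟩
  let q : T.Walk n m := p.map (Embedding.induce _).toHom
  have hq : ∀ z ∈ q.support, w ∈ l z := by
    intro z hz
    obtain ⟨c, -, rfl⟩ := List.mem_map.1 ((Walk.support_map _ p) ▸ hz)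
    exact c.2
  have hxy_mem := hTD.acyclic.mem_edges_of_reachable_deleteEdges hxy hn hm q
  exact ⟨hq _ (q.fst_mem_support_of_mem_edges hxy_mem),
    hq _ (q.snd_mem_support_of_mem_edges hxy_mem)⟩

theorem isSeparator_inter (hTD : TreeDecomp G T l) (hxy : T.Adj x y) (hx : ¬ l x ⊆ l y)
    (hy : ¬ l y ⊆ l x) : IsSeparator G (l x ∩ l y) := by
  -- every edge of `G` lies in a bag on one side of `xy`, so a walk avoiding `l x ∩ l y`
  -- cannot leave the union `A` of the bags on the side of `x`
  set A : Set V := {w | ∃ n, (T.deleteEdges {s(x, y)}).Reachable n x ∧ w ∈ l n}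
  obtain ⟨a, hax, hay⟩ := Set.not_subset.1 hx
  obtain ⟨b, hby, hbx⟩ := Set.not_subset.1 hy
  intro hpre
  obtain ⟨p⟩ := hpre ⟨a, fun h => hay h.2⟩ ⟨b, fun h => hbx h.1⟩
  obtain ⟨d, -, ⟨n', hn', hd₁⟩, hd₂⟩ :=
    p.exists_boundary_dart {c | c.1 ∈ A} ⟨x, .rfl, hax⟩
    fun ⟨n, hn, hbn⟩ => hbx (hTD.mem_inter_of_reachable_deleteEdges hxy hn .rfl hbn hby).1
  obtain ⟨n, hn₁, hn₂⟩ := hTD.coversE d.adj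
  rcases hTD.conn.reachable_deleteEdges_or x y n with h | h
  · exact hd₂ ⟨n, h, hn₂⟩
  · exact d.fst.2 (hTD.mem_inter_of_reachable_deleteEdges hxy hn' h hd₁ hn₁)

theorem isSeparator_inter_of_ne (hTD : TreeDecomp G T l) (hmax : ∀ x, Maximal G.IsClique (l x))
    (hxy : T.Adj x y) (hne : l x ≠ l y) : IsSeparator G (l x ∩ l y) :=
  hTD.isSeparator_inter hxy (fun h => hne ((hmax x).eq_of_le (hmax y).1 h))
    (fun h => hne ((hmax y).eq_of_le (hmax x).1 h).symm)

theorem exists_adj_inter_subset (hTD : TreeDecomp G T l) (hclique : ∀ x, G.IsClique (l x))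
    {S : Set V} (hS : IsSeparator G S) :
    ∃ x y, T.Adj x y ∧ l x ≠ l y ∧ l x ∩ l y ⊆ S := by
  simp only [IsSeparator, Preconnected, not_forall] at hS
  obtain ⟨a, b, hab⟩ := hS
  have hbag : ∀ n (c d : ↥Sᶜ), c.1 ∈ l n → d.1 ∈ l n →
      (G.induce Sᶜ).Reachable c d := by
    intro n c d hc hd
    by_cases h : c = d
    · exact h ▸ .rfl
    · exact Adj.reachable (hclique n hc hd (Subtype.coe_injective.ne h))
  -- the nodes whose bag meets the component of `a`; an edge of `T` leaving `P` is the one sought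
  let P : Set ι := {n | ∃ c : ↥Sᶜ, c.1 ∈ l n ∧ (G.induce Sᶜ).Reachable a c}
  obtain ⟨na, hna⟩ := hTD.coversV a
  obtain ⟨nb, hnb⟩ := hTD.coversV b
  obtain ⟨p⟩ := hTD.conn.preconnected na nb
  obtain ⟨d, -, ⟨c, hc, hac⟩, hy⟩ := p.exists_boundary_dart P ⟨a, hna, .rfl⟩
    fun ⟨c, hc, hac⟩ => hab (hac.trans (hbag nb c b hc hnb))
  refine ⟨d.fst, d.snd, d.adj, fun h => hy ⟨c, h ▸ hc, hac⟩, fun w ⟨hwx, hwy⟩ => ?_⟩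
  by_contra hw
  exact hy ⟨⟨w, hw⟩, hwy, hac.trans (hbag _ c ⟨w, hw⟩ hc hwx)⟩

theorem lt_ncard_bag [Fintype V] (hTD : TreeDecomp G T l) {k : ℕ}
    (hconn : KConnected k G) (hmax : ∀ x, Maximal G.IsClique (l x)) (z : ι) :
    k < (l z).ncard := by
  by_cases hflat : ∀ n, l n = l z
  · have huniv : l z = Set.univ := Set.eq_univ_of_forall fun w =>
      let ⟨n, hn⟩ := hTD.coversV w
      hflat n ▸ hn
    rw [huniv, Set.ncard_univ, Nat.card_eq_fintype_card]
    exact hconn.1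
  · obtain ⟨m, hm⟩ := not_forall.1 hflat
    obtain ⟨p⟩ := hTD.conn.preconnected z m
    obtain ⟨d, -, hx, hy⟩ := p.exists_boundary_dart {n | l n = l z} rfl hm
    have hne : l d.fst ≠ l d.snd := fun h => hy (h.symm.trans hx)
    calc k ≤ (l d.fst ∩ l d.snd).ncard := hconn.2 _ (hTD.isSeparator_inter_of_ne hmax d.adj hne)
      _ < (l d.fst).ncard := Set.ncard_lt_ncard
          (Set.inter_ssubset_left_iff.2 fun h => hne ((hmax _).eq_of_le (hmax _).1 h))
      _ = (l z).ncard := congrArg Set.ncard hx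

theorem forall_isSeparator_lt_ncard_iff [Fintype V] (hTD : TreeDecomp G T l) {k : ℕ}
    (hconn : KConnected k G) (hmax : ∀ x, Maximal G.IsClique (l x)) (u v : V) :
    (∀ S : Set V, IsSeparator G S → u ∈ S → v ∈ S → k < S.ncard) ↔
      ((∃! C : Set V, Maximal G.IsClique C ∧ u ∈ C ∧ v ∈ C) ∨
        ∀ x y : ι, T.Adj x y → u ∈ l x ∩ l y → v ∈ l x ∩ l y →
          k < (l x ∩ l y).ncard) := by
  constructor
  · refine fun h => .inr fun x y hxy hu hv => ?_
    by_cases hne : l x = l y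
    · rw [← hne, Set.inter_self]
      exact hTD.lt_ncard_bag hconn hmax x
    · exact h _ (hTD.isSeparator_inter_of_ne hmax hxy hne) hu hv
  · rintro h S hS hu hv
    by_contra! hle
    obtain ⟨x, y, hxy, hne, hsub⟩ := hTD.exists_adj_inter_subset (fun x => (hmax x).1) hS
    have hk := hconn.2 _ (hTD.isSeparator_inter_of_ne hmax hxy hne)
    obtain rfl : l x ∩ l y = S := Set.eq_of_subset_of_ncard_le hsub (hle.trans hk)
    rcases h with ⟨C, -, hC⟩ | h
    · exact hne ((hC _ ⟨hmax x, hu.1, hv.1⟩).trans (hC _ ⟨hmax y, hu.2, hv.2⟩).symm)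
    · exact (h x y hxy hu hv).not_ge hle

end TreeDecomp

theorem stmt_7_general {V ι : Type*} [Fintype V] [DecidableEq V] (G : SimpleGraph V) (k : ℕ)
    (hcard : k + 2 ≤ Fintype.card V) (hconn : KConnected k G)
    (T : SimpleGraph ι) (l : ι → Set V) (hT : IsCliqueTree G T l)
    (u v : V) (he : G.Adj u v) :
    KConnected k (contract G u v) ↔
      ((∃! C : Set V, Maximal G.IsClique C ∧ u ∈ C ∧ v ∈ C) ∨
        ∀ x y : ι, T.Adj x y → u ∈ l x ∩ l y → v ∈ l x ∩ l y →
          k < (l x ∩ l y).ncard) :=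
  (kConnected_contract_iff hcard hconn he.ne).trans
    (hT.1.forall_isSeparator_lt_ncard_iff hconn hT.2.1 u v)

/-- In a `k`-connected chordal graph with at least `k+2` vertices,
an edge `{u,v}` is contractible iff it lies in a unique maximal clique, or every
tree-edge bag intersection containing both endpoints has size more than `k`. -/
theorem stmt_7 {V ι : Type*} [Fintype V] [DecidableEq V] (G : SimpleGraph V) (k : ℕ)
    (hcard : k + 2 ≤ Fintype.card V) (hconn : KConnected k G) (hch : IsChordal G)
    (T : SimpleGraph ι) (l : ι → Set V) (hT : IsCliqueTree G T l)
    (u v : V) (he : G.Adj u v) :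
    KConnected k (contract G u v) ↔
      ((∃! C : Set V, Maximal G.IsClique C ∧ u ∈ C ∧ v ∈ C) ∨
        ∀ x y : ι, T.Adj x y → u ∈ l x ∩ l y → v ∈ l x ∩ l y →
          k < (l x ∩ l y).ncard) :=
  stmt_7_general G k hcard hconn T l hT u v he
end

section
/- Let G be a k-connected chordal graph with clique tree T and let e = {u,v} be an edge contained in at least two maximal cliques of G. If there is an edge {x,y} of T with {u,v} ⊆ l(x) ∩ l(y) and |l(x) ∩ l(y)| ≤ k, then e is not contractible. -/
open SimpleGraph

/-
The intersection of the bags at the ends of a tree edge separates the graph as soon as neither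
bag contains the other: deleting the tree edge splits the tree in two, every graph edge lies in a
bag on one side, and a vertex occurring on both sides lies in both end bags. If the bags at the
given tree edge coincide, walk in the tree from that bag to a different maximal clique through the
(connected) set of bags containing both `u` and `v`; the first change of bag gives a tree edge with
distinct bags and a smaller intersection. Contracting `uv` inside such a separator `S` leaves the
separator `S \ {v}` of size at most `k - 1`.
-/

namespace SimpleGraph

variable {V : Type*} {G : SimpleGraph V}

lemma Preconnected.exists_walk_support_subset_of_induce {s : Set V}
    (hs : (G.induce s).Preconnected) {a b : V} (ha : a ∈ s) (hb : b ∈ s) :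
    ∃ w : G.Walk a b, ∀ z ∈ w.support, z ∈ s := by
  obtain ⟨w⟩ := hs ⟨a, ha⟩ ⟨b, hb⟩
  refine ⟨w.map (Embedding.induce s).toHom, fun z hz => ?_⟩
  -- restated so that the endpoints are syntactically those of `Walk.map`, for `rw`
  have hz : z ∈ (w.map (Embedding.induce s).toHom).support := hz
  rw [Walk.support_map, List.mem_map] at hz
  obtain ⟨z, -, rfl⟩ := hz
  exact z.2

end SimpleGraph

namespace TreeDecomp

variable {V ι : Type*} {G : SimpleGraph V} {T : SimpleGraph ι} {l : ι → Set V}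

lemma mem_inter_of_reachable_of_not_reachable (hd : TreeDecomp G T l) {p q z₁ z₂ : ι} {w : V}
    (h₁ : (T.deleteEdges {s(p, q)}).Reachable z₁ p)
    (h₂ : ¬ (T.deleteEdges {s(p, q)}).Reachable z₂ p)
    (hw₁ : w ∈ l z₁) (hw₂ : w ∈ l z₂) :
    w ∈ l p ∩ l q := by
  obtain ⟨P, hP⟩ := (hd.subtree w).preconnected.exists_walk_support_subset_of_induce hw₁ hw₂
  have hpq : s(p, q) ∈ P.edges := by
    by_contra hpq
    exact h₂ ((P.toDeleteEdge _ hpq).reachable.symm.trans h₁)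
  exact ⟨hP p (P.fst_mem_support_of_mem_edges hpq), hP q (P.snd_mem_support_of_mem_edges hpq)⟩

lemma isSeparator_inter_s16 (hd : TreeDecomp G T l) {p q : ι} (hpq : T.Adj p q)
    (hp : ¬ l p ⊆ l q) (hq : ¬ l q ⊆ l p) :
    IsSeparator G (l p ∩ l q) := by
  set T' := T.deleteEdges {s(p, q)}
  have hqp : ¬ T'.Reachable q p := fun h =>
    isBridge_iff.mp (isAcyclic_iff_forall_adj_isBridge.mp hd.acyclic hpq) h.symm
  let sideP : Set V := {w | ∃ z, T'.Reachable z p ∧ w ∈ l z}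
  obtain ⟨a, hap, haq⟩ := Set.not_subset.mp hp
  obtain ⟨b, hbq, hbp⟩ := Set.not_subset.mp hq
  intro hpre
  obtain ⟨W⟩ := hpre ⟨a, fun h => haq h.2⟩ ⟨b, fun h => hbp h.1⟩
  have hb : b ∉ sideP := fun ⟨z, hz, hbz⟩ =>
    hbp (hd.mem_inter_of_reachable_of_not_reachable hz hqp hbz hbq).1
  obtain ⟨e, -, ⟨z₁, hz₁, he₁⟩, he₂⟩ :=
    W.exists_boundary_dart {c | c.1 ∈ sideP} ⟨p, .rfl, hap⟩ hb
  obtain ⟨z, hfst, hsnd⟩ := hd.coversE e.adj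
  by_cases hz : T'.Reachable z p
  · exact he₂ ⟨z, hz, hsnd⟩
  · exact e.fst.2 (hd.mem_inter_of_reachable_of_not_reachable hz₁ hz he₁ hfst)

lemma exists_walk_forall_mem_mem (hd : TreeDecomp G T l) {u v : V} {a b : ι}
    (hua : u ∈ l a) (hva : v ∈ l a) (hub : u ∈ l b) (hvb : v ∈ l b) :
    ∃ P : T.Walk a b, ∀ z ∈ P.support, u ∈ l z ∧ v ∈ l z := by
  classical
  obtain ⟨Pu, hPu⟩ := (hd.subtree u).preconnected.exists_walk_support_subset_of_induce hua hub
  obtain ⟨Pv, hPv⟩ := (hd.subtree v).preconnected.exists_walk_support_subset_of_induce hva hvb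
  -- in a tree both walks contain the unique path from `a` to `b`
  have hpath : Pu.toPath = Pv.toPath := (hd.acyclic.subsingleton_path a b).elim _ _
  refine ⟨Pu.toPath, fun z hz => ⟨hPu z (Pu.support_toPath_subset_support hz), ?_⟩⟩
  rw [hpath] at hz
  exact hPv z (Pv.support_toPath_subset_support hz)

lemma exists_adj_bag_eq_bag_ne (hd : TreeDecomp G T l) {u v : V} {a b : ι}
    (hua : u ∈ l a) (hva : v ∈ l a) (hub : u ∈ l b) (hvb : v ∈ l b) (hab : l b ≠ l a) :
    ∃ p q, T.Adj p q ∧ l p = l a ∧ l q ≠ l a ∧ u ∈ l q ∧ v ∈ l q := by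
  obtain ⟨P, hP⟩ := hd.exists_walk_forall_mem_mem hua hva hub hvb
  obtain ⟨e, he, hp, hq⟩ := P.exists_boundary_dart {z | l z = l a} rfl hab
  exact ⟨e.fst, e.snd, e.adj, hp, hq, hP _ (P.dart_snd_mem_support_of_mem_darts he)⟩

end TreeDecomp

namespace IsCliqueTree

variable {V ι : Type*} {G : SimpleGraph V} {T : SimpleGraph ι} {l : ι → Set V}

lemma isSeparator_inter_s16 (hT : IsCliqueTree G T l) {p q : ι} (hpq : T.Adj p q)
    (hne : l p ≠ l q) :
    IsSeparator G (l p ∩ l q) :=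
  hT.1.isSeparator_inter_s16 hpq (fun h => hne ((hT.2.1 p).eq_of_subset (hT.2.1 q).1 h))
    (fun h => hne ((hT.2.1 q).eq_of_subset (hT.2.1 p).1 h).symm)

lemma exists_adj_bag_ne_inter_subset (hT : IsCliqueTree G T l) {u v : V} {x y : ι}
    (hxy : T.Adj x y) (hu : u ∈ l x ∩ l y) (hv : v ∈ l x ∩ l y)
    (htwo : ∃ C D : Set V, Maximal G.IsClique C ∧ Maximal G.IsClique D ∧ C ≠ D ∧
      u ∈ C ∧ v ∈ C ∧ u ∈ D ∧ v ∈ D) :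
    ∃ p q, T.Adj p q ∧ l p ≠ l q ∧ u ∈ l p ∩ l q ∧ v ∈ l p ∩ l q ∧
      l p ∩ l q ⊆ l x ∩ l y := by
  by_cases hxy' : l x = l y
  swap
  · exact ⟨x, y, hxy, hxy', hu, hv, subset_rfl⟩
  obtain ⟨C, hC, huC, hvC, hCx⟩ : ∃ C, Maximal G.IsClique C ∧ u ∈ C ∧ v ∈ C ∧ C ≠ l x := by
    obtain ⟨C, D, hC, hD, hCD, huC, hvC, huD, hvD⟩ := htwo
    rcases hCD.ne_or_ne (l x) with hCx | hDx
    exacts [⟨C, hC, huC, hvC, hCx⟩, ⟨D, hD, huD, hvD, hDx⟩]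
  obtain ⟨b, rfl⟩ := hT.2.2 C hC
  obtain ⟨p, q, hpq, hpx, hqx, huq, hvq⟩ := hT.1.exists_adj_bag_eq_bag_ne hu.1 hv.1 huC hvC hCx
  refine ⟨p, q, hpq, hpx ▸ hqx.symm, ⟨hpx ▸ hu.1, huq⟩, ⟨hpx ▸ hv.1, hvq⟩, ?_⟩
  rw [← hxy', Set.inter_self, ← hpx]
  exact Set.inter_subset_left

end IsCliqueTree

section Contraction

variable {V : Type*} {G : SimpleGraph V} {u v : V} {S : Set V}

lemma isSeparator_contract_of_mem (hS : IsSeparator G S) (hu : u ∈ S) (hv : v ∈ S) :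
    IsSeparator (contract G u v) {a | a.1 ∈ S} := by
  -- outside `S` the merged vertex is gone, so adjacency in the contraction is adjacency in `G`
  let F : (contract G u v).induce {a | a.1 ∈ S}ᶜ →g G.induce Sᶜ :=
    { toFun := fun a => ⟨a.1.1, a.2⟩
      map_rel' := by
        rintro a b ⟨-, hab | ⟨rfl, -⟩ | ⟨rfl, -⟩⟩
        · exact hab
        · exact absurd hu a.2
        · exact absurd hu b.2 }
  intro hpre
  refine hS fun a b => ?_
  have ha : a.1 ≠ v := fun h => a.2 (h ▸ hv)
  have hb : b.1 ≠ v := fun h => b.2 (h ▸ hv)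
  exact (hpre ⟨⟨a, ha⟩, a.2⟩ ⟨⟨b, hb⟩, b.2⟩).map F

lemma ncard_subtype_ne_of_mem [Finite V] (hv : v ∈ S) :
    {a : {x // x ≠ v} | a.1 ∈ S}.ncard = S.ncard - 1 := by
  have himage : Subtype.val '' {a : {x // x ≠ v} | a.1 ∈ S} = S \ {v} := by
    ext w
    simp
  rw [← Set.ncard_image_of_injective _ Subtype.val_injective, himage,
    Set.ncard_sdiff_singleton_of_mem hv]

lemma not_kConnected_contract_of_isSeparator [Fintype V] [DecidableEq V] {k : ℕ}
    (hS : IsSeparator G S) (hu : u ∈ S) (hv : v ∈ S) (hk : S.ncard ≤ k) :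
    ¬ KConnected k (contract G u v) := by
  rintro ⟨-, hsep⟩
  have hcontract := hsep _ (isSeparator_contract_of_mem hS hu hv)
  rw [ncard_subtype_ne_of_mem hv] at hcontract
  have hpos : 0 < S.ncard := (Set.ncard_pos).mpr ⟨v, hv⟩
  omega

end Contraction

theorem stmt_16_general {V ι : Type*} [Fintype V] [DecidableEq V] (G : SimpleGraph V) (k : ℕ)
    (T : SimpleGraph ι) (l : ι → Set V) (hT : IsCliqueTree G T l)
    (u v : V)
    (htwo : ∃ C D : Set V, Maximal G.IsClique C ∧ Maximal G.IsClique D ∧ C ≠ D ∧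
      u ∈ C ∧ v ∈ C ∧ u ∈ D ∧ v ∈ D)
    (hsmall : ∃ x y : ι, T.Adj x y ∧ u ∈ l x ∩ l y ∧ v ∈ l x ∩ l y ∧
      (l x ∩ l y).ncard ≤ k) :
    ¬ KConnected k (contract G u v) := by
  obtain ⟨x, y, hxy, hu, hv, hk⟩ := hsmall
  obtain ⟨p, q, hpq, hne, hup, hvp, hsub⟩ := hT.exists_adj_bag_ne_inter_subset hxy hu hv htwo
  exact not_kConnected_contract_of_isSeparator (hT.isSeparator_inter_s16 hpq hne) hup hvp
    ((Set.ncard_le_ncard hsub).trans hk)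

/-- If an edge of a `k`-connected chordal graph lies in at least
two maximal cliques and some tree-edge bag intersection containing both its
endpoints has size at most `k`, then the edge is not contractible. -/
theorem stmt_16 {V ι : Type*} [Fintype V] [DecidableEq V] (G : SimpleGraph V) (k : ℕ)
    (hcard : k + 2 ≤ Fintype.card V) (hconn : KConnected k G) (hch : IsChordal G)
    (T : SimpleGraph ι) (l : ι → Set V) (hT : IsCliqueTree G T l)
    (u v : V) (he : G.Adj u v)
    (htwo : ∃ C D : Set V, Maximal G.IsClique C ∧ Maximal G.IsClique D ∧ C ≠ D ∧
      u ∈ C ∧ v ∈ C ∧ u ∈ D ∧ v ∈ D)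
    (hsmall : ∃ x y : ι, T.Adj x y ∧ u ∈ l x ∩ l y ∧ v ∈ l x ∩ l y ∧
      (l x ∩ l y).ncard ≤ k) :
    ¬ KConnected k (contract G u v) :=
  stmt_16_general G k T l hT u v htwo hsmall
end
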